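/- Let (X,d) be a metric space (finite or infinite). If (X,d) has p-negative type for some p > 0, then (X,d) has strict q-negative type for every q with 0 ≤ q < p. -/

import Mathlib

open scoped BigOperators

/-- The kernel `d(x,y)^p`, with the convention that it vanishes on the diagonal
(this matters only when `p = 0`). -/
noncomputable def negKer {X : Type*} [MetricSpace X] (p : ℝ) (x y : X) : ℝ :=
  @ite ℝ (x = y) (Classical.dec _) 0 (dist x y ^ p)

/-- `(X,d)` has `p`-negative type: for all `k ≥ 2`, pairwise distinct points
`x₁,…,x_k` and reals `η₁,…,η_k` summing to zero,
`∑_{i,j} d(xᵢ,xⱼ)^p ηᵢ ηⱼ ≤ 0`. -/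
def HasNegType (X : Type*) [MetricSpace X] (p : ℝ) : Prop :=
  ∀ (k : ℕ), 2 ≤ k → ∀ (x : Fin k → X), Function.Injective x →
    ∀ (η : Fin k → ℝ), (∑ i, η i) = 0 →
      (∑ i, ∑ j, negKer p (x i) (x j) * η i * η j) ≤ 0

/-- `(X,d)` has strict `p`-negative type: `p`-negative type, with strict
inequality whenever `η ≠ 0`. -/
def HasStrictNegType (X : Type*) [MetricSpace X] (p : ℝ) : Prop :=
  HasNegType X p ∧
  ∀ (k : ℕ), 2 ≤ k → ∀ (x : Fin k → X), Function.Injective x →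
    ∀ (η : Fin k → ℝ), (∑ i, η i) = 0 → η ≠ 0 →
      (∑ i, ∑ j, negKer p (x i) (x j) * η i * η j) < 0

/-!
By Schoenberg's argument, `p`-negative type makes `d(xᵢ,xⱼ) ^ p` conditionally negative
semidefinite, hence every matrix `exp (-s d(xᵢ,xⱼ) ^ p)`, `s ≥ 0`, positive semidefinite.
For `0 < α = q / p < 1` and `t ≥ 0` one has `C t ^ α = ∫₀^∞ (1 - e^{-st}) s^{-1-α} ds`
with `C > 0`, so when `∑ ηᵢ = 0` the `q`-form is `-C⁻¹ ∫₀^∞ s^{-1-α} G(s) ds` with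
`G(s) = ∑ ηᵢ ηⱼ exp (-s d(xᵢ,xⱼ) ^ p) ≥ 0`. As the points are distinct, `G(s) → ∑ ηᵢ² > 0`
when `s → ∞`, so the integral is positive. For `q = 0` the form is `-∑ ηᵢ²` outright.
-/

open Matrix Real MeasureTheory Set Filter Topology

section FractionalPower

variable {α : ℝ}

lemma setIntegral_Ioi_pos_of_eventually_pos {f : ℝ → ℝ} {a : ℝ} (hf : IntegrableOn f (Ioi a))
    (hf_nonneg : ∀ s ∈ Ioi a, 0 ≤ f s) (hf_pos : ∀ᶠ s in atTop, 0 < f s) :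
    0 < ∫ s in Ioi a, f s := by
  rw [setIntegral_pos_iff_support_of_nonneg_ae
    ((ae_restrict_iff' measurableSet_Ioi).mpr (ae_of_all _ hf_nonneg)) hf]
  obtain ⟨M, hM⟩ := eventually_atTop.mp hf_pos
  calc (0 : ENNReal) < volume (Ioi (max M a)) := by simp
    _ ≤ volume (Function.support f ∩ Ioi a) := measure_mono fun s hs =>
      ⟨(hM s (le_max_left M a |>.trans hs.le)).ne', (le_max_right M a).trans_lt hs⟩

lemma integrableOn_one_sub_exp_neg_mul_rpow (hα0 : 0 < α) (hα1 : α < 1) :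
    IntegrableOn (fun s => (1 - exp (-s)) * s ^ (-1 - α)) (Ioi 0) := by
  have hcont : ContinuousOn (fun s : ℝ => (1 - exp (-s)) * s ^ (-1 - α)) (Ioi 0) :=
    (by fun_prop : Continuous fun s : ℝ => 1 - exp (-s)).continuousOn.mul
      (continuousOn_id.rpow_const fun s hs => Or.inl (ne_of_gt hs))
  have hnorm : ∀ s : ℝ, 0 < s → ‖(1 - exp (-s)) * s ^ (-1 - α)‖ = (1 - exp (-s)) * s ^ (-1 - α) :=
    fun s hs => Real.norm_of_nonneg (mul_nonneg (by simpa using hs.le) (rpow_nonneg hs.le _))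
  rw [← Ioc_union_Ioi_eq_Ioi zero_le_one]
  refine IntegrableOn.union ?_ ?_
  · -- near `0` the integrand is at most `s ^ (-α)`, since `1 - exp (-s) ≤ s`
    have hint : IntegrableOn (fun s : ℝ => s ^ (-α)) (Ioc 0 1) :=
      (intervalIntegrable_iff_integrableOn_Ioc_of_le zero_le_one).mp
        (intervalIntegral.intervalIntegrable_rpow' (by linarith))
    refine hint.mono' ((hcont.mono Ioc_subset_Ioi_self).aestronglyMeasurable measurableSet_Ioc)
      ((ae_restrict_iff' measurableSet_Ioc).mpr (ae_of_all _ fun s hs => ?_))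
    have hs0 : 0 < s := hs.1
    rw [hnorm s hs0]
    calc (1 - exp (-s)) * s ^ (-1 - α) ≤ s * s ^ (-1 - α) := by
          gcongr
          linarith [add_one_le_exp (-s)]
      _ = s ^ (-α) := by
          rw [← rpow_one_add' hs0.le (by linarith)]
          ring_nf
  · refine (integrableOn_Ioi_rpow_of_lt (by linarith : -1 - α < -1) one_pos).mono'
      ((hcont.mono (Ioi_subset_Ioi zero_le_one)).aestronglyMeasurable measurableSet_Ioi)
      ((ae_restrict_iff' measurableSet_Ioi).mpr (ae_of_all _ fun s hs => ?_))
    have hs0 : 0 < s := one_pos.trans hs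
    rw [hnorm s hs0]
    exact mul_le_of_le_one_left (rpow_nonneg hs0.le _) (by linarith [exp_pos (-s)])

lemma integral_one_sub_exp_neg_mul_rpow_pos (hα0 : 0 < α) (hα1 : α < 1) :
    0 < ∫ s in Ioi 0, (1 - exp (-s)) * s ^ (-1 - α) := by
  have hpos : ∀ s : ℝ, 0 < s → 0 < (1 - exp (-s)) * s ^ (-1 - α) := fun s hs =>
    mul_pos (by simpa using hs) (rpow_pos_of_pos hs _)
  exact setIntegral_Ioi_pos_of_eventually_pos (integrableOn_one_sub_exp_neg_mul_rpow hα0 hα1)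
    (fun s hs => (hpos s hs).le) ((eventually_gt_atTop 0).mono hpos)

lemma one_sub_exp_neg_mul_mul_rpow_eq {t s : ℝ} (ht : 0 < t) (hs : 0 < s) :
    (1 - exp (-(s * t))) * s ^ (-1 - α) =
      t ^ (1 + α) * ((1 - exp (-(t * s))) * (t * s) ^ (-1 - α)) := by
  rw [mul_rpow ht.le hs.le, mul_comm t s, mul_left_comm, ← mul_assoc (t ^ (1 + α)),
    ← rpow_add ht]
  norm_num

lemma integrableOn_one_sub_exp_neg_mul_mul_rpow (hα0 : 0 < α) (hα1 : α < 1) {t : ℝ}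
    (ht : 0 ≤ t) : IntegrableOn (fun s => (1 - exp (-(s * t))) * s ^ (-1 - α)) (Ioi 0) := by
  rcases ht.eq_or_lt with rfl | ht
  · simp
  have hcomp := (integrableOn_Ioi_comp_mul_left_iff _ 0 ht).mpr
    (by simpa using integrableOn_one_sub_exp_neg_mul_rpow hα0 hα1)
  exact IntegrableOn.congr_fun (hcomp.const_mul (t ^ (1 + α)))
    (fun s hs => (one_sub_exp_neg_mul_mul_rpow_eq ht hs).symm) measurableSet_Ioi

lemma integral_one_sub_exp_neg_mul_mul_rpow (hα0 : 0 < α) {t : ℝ} (ht : 0 ≤ t) :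
    ∫ s in Ioi 0, (1 - exp (-(s * t))) * s ^ (-1 - α) =
      t ^ α * ∫ s in Ioi 0, (1 - exp (-s)) * s ^ (-1 - α) := by
  rcases ht.eq_or_lt with rfl | ht
  · simp [zero_rpow hα0.ne']
  rw [setIntegral_congr_fun measurableSet_Ioi fun s hs => one_sub_exp_neg_mul_mul_rpow_eq ht hs,
    integral_const_mul, integral_comp_mul_left_Ioi (fun u => (1 - exp (-u)) * u ^ (-1 - α)) 0 ht,
    mul_zero, smul_eq_mul, ← mul_assoc, ← rpow_neg_one, ← rpow_add ht]
  norm_num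

end FractionalPower

namespace Matrix

variable {ι : Type*} [Fintype ι] {D : Matrix ι ι ℝ} {α : ℝ}

lemma dotProduct_mulVec_eq_sum_sum (A : Matrix ι ι ℝ) (η : ι → ℝ) :
    η ⬝ᵥ A *ᵥ η = ∑ i, ∑ j, A i j * η i * η j := by
  simp only [dotProduct, mulVec, Finset.mul_sum]
  exact Finset.sum_congr rfl fun i _ => Finset.sum_congr rfl fun j _ => by ring

lemma posSemidef_of_forall_sum_sum_nonneg {A : Matrix ι ι ℝ} (hA : A.IsHermitian)
    (h : ∀ ξ : ι → ℝ, 0 ≤ ∑ i, ∑ j, A i j * ξ i * ξ j) : A.PosSemidef :=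
  posSemidef_iff_dotProduct_mulVec.mpr ⟨hA, fun ξ => by
    simpa [dotProduct_mulVec_eq_sum_sum] using h ξ⟩

namespace PosSemidef

lemma map_pow {A : Matrix ι ι ℝ} (hA : A.PosSemidef) (n : ℕ) :
    (A.map (· ^ n)).PosSemidef := by
  induction n with
  | zero =>
    convert posSemidef_vecMulVec_self_star (1 : ι → ℝ) using 1
    ext; simp [vecMulVec]
  | succ n ih =>
    rw [show A.map (· ^ (n + 1)) = A.map (· ^ n) ⊙ A by ext; simp [pow_succ]]
    exact ih.hadamard hA

lemma map_exp {A : Matrix ι ι ℝ} (hA : A.PosSemidef) : (A.map exp).PosSemidef := by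
  refine posSemidef_of_forall_sum_sum_nonneg (hA.isHermitian.map exp fun _ => rfl) fun ξ => ?_
  have hsum : HasSum (fun n => (n.factorial : ℝ)⁻¹ * ∑ i, ∑ j, A i j ^ n * ξ i * ξ j)
      (∑ i, ∑ j, exp (A i j) * ξ i * ξ j) := by
    simp only [Finset.mul_sum]
    refine hasSum_sum fun i _ => hasSum_sum fun j _ => ?_
    rw [exp_eq_exp_ℝ, mul_assoc]
    simpa only [div_eq_inv_mul, mul_assoc] using
      (NormedSpace.expSeries_div_hasSum_exp (A i j)).mul_right (ξ i * ξ j)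
  refine hsum.nonneg fun n => mul_nonneg (by positivity) ?_
  simpa [dotProduct_mulVec_eq_sum_sum] using (hA.map_pow n).dotProduct_mulVec_nonneg ξ

end PosSemidef

def IsCondNegSemidef (D : Matrix ι ι ℝ) : Prop :=
  ∀ η : ι → ℝ, ∑ i, η i = 0 → η ⬝ᵥ D *ᵥ η ≤ 0

namespace IsCondNegSemidef

lemma smul (hD : D.IsCondNegSemidef) {s : ℝ} (hs : 0 ≤ s) : (s • D).IsCondNegSemidef :=
  fun η hη => by
    rw [smul_mulVec, dotProduct_smul, smul_eq_mul]
    exact mul_nonpos_of_nonneg_of_nonpos hs (hD η hη)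

lemma posSemidef_gram (hD : D.IsCondNegSemidef) (hsymm : D.IsSymm) (o : ι) :
    (of fun i j => D i o + D o j - D i j - D o o).PosSemidef := by
  classical
  refine posSemidef_of_forall_sum_sum_nonneg ?_ fun ξ => ?_
  · ext i j
    simp only [conjTranspose_apply, of_apply, star_trivial, ← hsymm.apply]
    ring
  set S := ∑ i, ξ i
  have hη : ∑ i, (ξ i - if i = o then S else 0) = 0 := by simp [Finset.sum_sub_distrib, S]
  have hneg := hD _ hη
  rw [dotProduct_mulVec_eq_sum_sum] at hneg
  have hcomm : ∑ i, ∑ j, D o j * ξ i * ξ j = ∑ j, D o j * S * ξ j := by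
    rw [Finset.sum_comm]
    simp only [S, Finset.mul_sum, Finset.sum_mul]
  -- `ξ - S • Pi.single o 1` sums to zero, and its `D`-form is minus the Gram form of `ξ`
  suffices ∑ i, ∑ j, (D i o + D o j - D i j - D o o) * ξ i * ξ j =
      -∑ i, ∑ j, D i j * (ξ i - if i = o then S else 0) * (ξ j - if j = o then S else 0) by
    simp only [of_apply]
    linarith
  simp only [sub_mul, mul_sub, add_mul, Finset.sum_sub_distrib, Finset.sum_add_distrib, mul_ite,
    ite_mul, mul_zero, zero_mul, Finset.sum_ite_irrel, Finset.sum_const_zero, Finset.sum_ite_eq',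
    Finset.mem_univ, if_true, ← Finset.sum_mul, ← Finset.mul_sum, hcomm, S]
  ring

theorem posSemidef_map_exp_neg (hD : D.IsCondNegSemidef) (hsymm : D.IsSymm) :
    (D.map fun d => exp (-d)).PosSemidef := by
  cases isEmpty_or_nonempty ι with
  | inl _ =>
    rw [Subsingleton.elim (D.map _) 0]
    exact PosSemidef.zero
  | inr hne =>
    obtain ⟨o⟩ := hne
    set u : ι → ℝ := fun i => exp (-D i o)
    have hfactor : D.map (fun d => exp (-d)) = exp (D o o) •
        (vecMulVec u (star u) ⊙ (of fun i j => D i o + D o j - D i j - D o o).map exp) := by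
      ext i j
      simp only [map_apply, smul_apply, hadamard_apply, vecMulVec_apply, star_trivial, of_apply,
        smul_eq_mul, u, ← exp_add, ← hsymm.apply j o]
      ring_nf
    rw [hfactor]
    exact ((posSemidef_vecMulVec_self_star u).hadamard
      (hD.posSemidef_gram hsymm o).map_exp).smul (exp_pos _).le

end IsCondNegSemidef

lemma integral_rpow_mul_dotProduct_map_exp_neg_smul_mulVec (hD : ∀ i j, 0 ≤ D i j)
    (hα0 : 0 < α) (hα1 : α < 1) {η : ι → ℝ} (hη : ∑ i, η i = 0) :
    IntegrableOn (fun s => s ^ (-1 - α) * (η ⬝ᵥ (s • D).map (fun d => exp (-d)) *ᵥ η)) (Ioi 0) ∧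
      (η ⬝ᵥ D.map (· ^ α) *ᵥ η) * ∫ s in Ioi 0, (1 - exp (-s)) * s ^ (-1 - α) =
        -∫ s in Ioi 0, s ^ (-1 - α) * (η ⬝ᵥ (s • D).map (fun d => exp (-d)) *ᵥ η) := by
  set F : ι → ι → ℝ → ℝ := fun i j s => (1 - exp (-(s * D i j))) * s ^ (-1 - α) * (η i * η j)
  have hF : ∀ i j, IntegrableOn (F i j) (Ioi 0) := fun i j =>
    (integrableOn_one_sub_exp_neg_mul_mul_rpow hα0 hα1 (hD i j)).mul_const _
  -- the constant part of `1 - exp (-(s * D i j))` is killed by `∑ i, η i = 0`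
  have hpt : ∀ s : ℝ, s ^ (-1 - α) * (η ⬝ᵥ (s • D).map (fun d => exp (-d)) *ᵥ η) =
      -∑ i, ∑ j, F i j s := by
    intro s
    have hzero : ∑ i, ∑ j, s ^ (-1 - α) * (η i * η j) = 0 := by
      simp [← Finset.mul_sum, hη]
    simp only [F, dotProduct_mulVec_eq_sum_sum, map_apply, smul_apply, smul_eq_mul, sub_mul,
      one_mul, Finset.sum_sub_distrib, hzero, Finset.mul_sum]
    ring_nf
  have hsumF : IntegrableOn (fun s => ∑ i, ∑ j, F i j s) (Ioi 0) :=
    integrable_finsetSum _ fun i _ => integrable_finsetSum _ fun j _ => hF i j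
  refine ⟨by simp only [hpt]; exact hsumF.fun_neg, ?_⟩
  simp only [hpt, integral_neg, neg_neg]
  rw [integral_finsetSum _ fun i _ => integrable_finsetSum _ fun j _ => hF i j,
    dotProduct_mulVec_eq_sum_sum, Finset.sum_mul]
  refine Finset.sum_congr rfl fun i _ => ?_
  rw [integral_finsetSum _ fun j _ => hF i j, Finset.sum_mul]
  refine Finset.sum_congr rfl fun j _ => ?_
  rw [integral_mul_const, integral_one_sub_exp_neg_mul_mul_rpow hα0 (hD i j), map_apply]
  ring

lemma tendsto_dotProduct_map_exp_neg_smul_mulVec (hdiag : ∀ i, D i i = 0)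
    (hoff : Pairwise fun i j => 0 < D i j) (η : ι → ℝ) :
    Tendsto (fun s : ℝ => η ⬝ᵥ (s • D).map (fun d => exp (-d)) *ᵥ η) atTop (𝓝 (η ⬝ᵥ η)) := by
  classical
  have hlim : Tendsto (fun s : ℝ => (s • D).map fun d => exp (-d)) atTop (𝓝 1) := by
    refine tendsto_pi_nhds.mpr fun i => tendsto_pi_nhds.mpr fun j => ?_
    rcases eq_or_ne i j with rfl | hij
    · simp [hdiag]
    · rw [one_apply_ne hij]
      exact tendsto_exp_neg_atTop_nhds_zero.comp (tendsto_id.atTop_mul_const (hoff hij))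
  have hcont : Continuous fun M : Matrix ι ι ℝ => η ⬝ᵥ M *ᵥ η :=
    continuous_const.dotProduct (continuous_id.matrix_mulVec continuous_const)
  simpa only [one_mulVec, Function.comp_def] using (hcont.tendsto 1).comp hlim

theorem IsCondNegSemidef.dotProduct_map_rpow_mulVec_neg (hD : D.IsCondNegSemidef)
    (hsymm : D.IsSymm) (hdiag : ∀ i, D i i = 0) (hoff : Pairwise fun i j => 0 < D i j)
    (hα0 : 0 < α) (hα1 : α < 1) {η : ι → ℝ} (hη : ∑ i, η i = 0) (hne : η ≠ 0) :
    η ⬝ᵥ D.map (· ^ α) *ᵥ η < 0 := by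
  have hD_nonneg : ∀ i j, 0 ≤ D i j := fun i j => by
    rcases eq_or_ne i j with rfl | hij
    exacts [(hdiag i).ge, (hoff hij).le]
  obtain ⟨hint, heq⟩ :=
    integral_rpow_mul_dotProduct_map_exp_neg_smul_mulVec hD_nonneg hα0 hα1 hη
  have hnonneg : ∀ s ∈ Ioi (0 : ℝ),
      0 ≤ s ^ (-1 - α) * (η ⬝ᵥ (s • D).map (fun d => exp (-d)) *ᵥ η) := fun s hs =>
    mul_nonneg (rpow_nonneg (le_of_lt hs) _) (by
      simpa using ((hD.smul (le_of_lt hs)).posSemidef_map_exp_neg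
        (hsymm.smul s)).dotProduct_mulVec_nonneg η)
  have hpos : ∀ᶠ s in atTop,
      0 < s ^ (-1 - α) * (η ⬝ᵥ (s • D).map (fun d => exp (-d)) *ᵥ η) := by
    have hη_pos : 0 < η ⬝ᵥ η := by simpa using dotProduct_self_star_pos_iff.mpr hne
    filter_upwards [eventually_gt_atTop 0,
      (tendsto_dotProduct_map_exp_neg_smul_mulVec hdiag hoff η).eventually_const_lt hη_pos]
      with s hs hG
    exact mul_pos (rpow_pos_of_pos hs _) hG
  have hI := setIntegral_Ioi_pos_of_eventually_pos hint hnonneg hpos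
  have hC := integral_one_sub_exp_neg_mul_rpow_pos hα0 hα1
  nlinarith

end Matrix

section NegType

variable {X : Type*} [MetricSpace X]

lemma negKer_of_ne_zero {p : ℝ} (hp : p ≠ 0) (x y : X) : negKer p x y = dist x y ^ p := by
  unfold negKer
  split_ifs with h <;> simp [h, zero_rpow hp]

lemma HasNegType.isCondNegSemidef {p : ℝ} (h : HasNegType X p) (hp : p ≠ 0) {k : ℕ}
    (hk : 2 ≤ k) {x : Fin k → X} (hx : Function.Injective x) :
    (of fun i j => dist (x i) (x j) ^ p).IsCondNegSemidef := fun η hη => by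
  simpa [dotProduct_mulVec_eq_sum_sum, negKer_of_ne_zero hp] using h k hk x hx η hη

lemma hasStrictNegType_of_forall_lt {q : ℝ}
    (h : ∀ k, 2 ≤ k → ∀ x : Fin k → X, Function.Injective x → ∀ η : Fin k → ℝ, ∑ i, η i = 0 →
      η ≠ 0 → ∑ i, ∑ j, negKer q (x i) (x j) * η i * η j < 0) :
    HasStrictNegType X q := by
  refine ⟨fun k hk x hx η hη => ?_, h⟩
  rcases eq_or_ne η 0 with rfl | hne
  · simp
  · exact (h k hk x hx η hη hne).le

lemma hasStrictNegType_zero : HasStrictNegType X 0 := by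
  refine hasStrictNegType_of_forall_lt fun k _ x hx η hη hne => ?_
  have hker : ∀ i j, negKer 0 (x i) (x j) * η i * η j =
      η i * η j - if i = j then η i * η i else 0 := fun i j => by
    rcases eq_or_ne i j with rfl | hij
    · simp [negKer]
    · simp [negKer, hx.ne hij, hij]
  simp only [hker, Finset.sum_sub_distrib, Finset.sum_ite_eq, Finset.mem_univ, if_true,
    ← Finset.mul_sum, hη, mul_zero, zero_sub]
  simpa [dotProduct] using dotProduct_self_star_pos_iff.mpr hne

lemma HasNegType.sum_negKer_lt_zero {p q : ℝ} (h : HasNegType X p) (hp : 0 < p) (hq : 0 < q)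
    (hqp : q < p) {k : ℕ} (hk : 2 ≤ k) {x : Fin k → X} (hx : Function.Injective x)
    {η : Fin k → ℝ} (hη : ∑ i, η i = 0) (hne : η ≠ 0) :
    ∑ i, ∑ j, negKer q (x i) (x j) * η i * η j < 0 := by
  have key := (h.isCondNegSemidef hp.ne' hk hx).dotProduct_map_rpow_mulVec_neg
    (IsSymm.ext fun i j => by simp [dist_comm]) (fun i => by simp [zero_rpow hp.ne'])
    (fun i j hij => rpow_pos_of_pos (dist_pos.mpr (hx.ne hij)) _) (div_pos hq hp)
    ((div_lt_one hp).mpr hqp) hη hne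
  rw [dotProduct_mulVec_eq_sum_sum] at key
  convert key using 5 with i _ j _
  simp [negKer_of_ne_zero hq.ne', ← rpow_mul dist_nonneg, mul_div_cancel₀ _ hp.ne']

end NegType

/-- If a metric space has `p`-negative type for some `p > 0`, then it has
strict `q`-negative type for every `0 ≤ q < p`. -/
theorem strictNegType_of_lt {X : Type*} [MetricSpace X] (p : ℝ) (hp : 0 < p)
    (h : HasNegType X p) :
    ∀ q : ℝ, 0 ≤ q → q < p → HasStrictNegType X q := by
  intro q hq0 hqp
  rcases hq0.eq_or_lt with rfl | hq
  · exact hasStrictNegType_zero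
  · exact hasStrictNegType_of_forall_lt fun k hk x hx η hη hne =>
      h.sum_negKer_lt_zero hp hq hqp hk hx hη hne
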